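/- Let $(Y,\rho)$ be a metric space of finite diameter $D$, let $v_n : Y \to \mathbb{R}$ be uniformly bounded by $K>0$ and uniformly $A$-Lipschitz, and let $T_n : Y \to Y$ be uniformly $L$-Lipschitz maps with $L \ge d \ge 2$. Then the function $g(z)=\sum_{n\ge0} d^{-n} v_{n+1}(T_n\circ\cdots\circ T_1(z))$ is well-defined and Hölder continuous with exponent $\beta$ for every $0<\beta<\log d/\log L$. -/

import Mathlib

/-- `seqComp T n = T n ∘ ⋯ ∘ T 1`, with `seqComp T 0 = id`. -/
def seqComp {Y : Type*} (T : ℕ → Y → Y) : ℕ → Y → Y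
  | 0 => id
  | n + 1 => T (n + 1) ∘ seqComp T n

set_option maxHeartbeats 1000000 in
theorem stmt1 {Y : Type*} [MetricSpace Y] (D : ℝ) (hD : ∀ x y : Y, dist x y ≤ D)
    (d : ℕ) (hd : 2 ≤ d) (K A L : ℝ) (hK : 0 < K)
    (v : ℕ → Y → ℝ) (T : ℕ → Y → Y)
    (hb : ∀ n z, |v n z| ≤ K)
    (hlip : ∀ n x y, |v n x - v n y| ≤ A * dist x y)
    (hT : ∀ n x y, dist (T n x) (T n y) ≤ L * dist x y)
    (hL : (d : ℝ) ≤ L) :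
    (∀ z : Y, Summable (fun n => ((d : ℝ) ^ n)⁻¹ * v (n + 1) (seqComp T n z))) ∧
    ∀ β : ℝ, 0 < β → β < Real.log d / Real.log L →
      ∃ C > 0, ∀ x y : Y,
        |(∑' n, ((d : ℝ) ^ n)⁻¹ * v (n + 1) (seqComp T n x)) -
          (∑' n, ((d : ℝ) ^ n)⁻¹ * v (n + 1) (seqComp T n y))| ≤ C * dist x y ^ β := by
  have hd2 : (2:ℝ) ≤ (d:ℝ) := by exact_mod_cast hd
  have hd1 : (1:ℝ) < (d:ℝ) := by linarith
  have hd0 : (0:ℝ) < (d:ℝ) := by linarith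
  have hL1 : (1:ℝ) < L := lt_of_lt_of_le hd1 hL
  have hL0 : (0:ℝ) < L := by linarith
  -- iterate Lipschitz bound
  have hseq : ∀ n (x y : Y), dist (seqComp T n x) (seqComp T n y) ≤ L ^ n * dist x y := by
    intro n
    induction n with
    | zero => intro x y; simp [seqComp]
    | succ n ih =>
        intro x y
        calc dist (seqComp T (n+1) x) (seqComp T (n+1) y)
            = dist (T (n+1) (seqComp T n x)) (T (n+1) (seqComp T n y)) := rfl
          _ ≤ L * dist (seqComp T n x) (seqComp T n y) := hT _ _ _
          _ ≤ L * (L ^ n * dist x y) := by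
              exact mul_le_mul_of_nonneg_left (ih x y) hL0.le
          _ = L ^ (n+1) * dist x y := by ring
  -- summability
  have hsum : ∀ z : Y, Summable (fun n => ((d : ℝ) ^ n)⁻¹ * v (n + 1) (seqComp T n z)) := by
    intro z
    apply Summable.of_norm_bounded (g := fun n => K * ((d:ℝ)⁻¹) ^ n)
    · exact (summable_geometric_of_lt_one (by positivity)
        (by rw [inv_lt_one_iff₀]; right; exact hd1)).mul_left K
    · intro n
      rw [Real.norm_eq_abs, abs_mul, abs_inv, abs_pow, abs_of_pos hd0, inv_pow]
      rw [mul_comm K]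
      exact mul_le_mul_of_nonneg_left (hb _ _) (by positivity)
  refine ⟨hsum, ?_⟩
  intro β hβ hβ'
  have hlogL : 0 < Real.log L := Real.log_pos hL1
  have hβ1 : β < 1 := by
    have : Real.log (d:ℝ) ≤ Real.log L := Real.log_le_log hd0 hL
    have : Real.log (d:ℝ) / Real.log L ≤ 1 := by
      rw [div_le_one hlogL]; exact this
    linarith
  -- L^β < d
  have hLβ : L ^ β < (d:ℝ) := by
    have h1 : β * Real.log L < Real.log (d:ℝ) := by
      rw [div_eq_inv_mul] at hβ'
      calc β * Real.log L < (Real.log (d:ℝ) / Real.log L) * Real.log L := by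
            apply mul_lt_mul_of_pos_right _ hlogL
            rw [div_eq_inv_mul]; exact hβ'
        _ = Real.log (d:ℝ) := by field_simp
    calc L ^ β = Real.exp (β * Real.log L) := by
          rw [Real.rpow_def_of_pos hL0, mul_comm]
      _ < Real.exp (Real.log (d:ℝ)) := Real.exp_lt_exp.2 h1
      _ = (d:ℝ) := Real.exp_log hd0
  set A' : ℝ := max A 0 + 1 with hA'def
  have hA'0 : 0 < A' := by positivity
  have hlip' : ∀ n (x y : Y), |v n x - v n y| ≤ A' * dist x y := by
    intro n x y
    refine (hlip n x y).trans (mul_le_mul_of_nonneg_right ?_ dist_nonneg)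
    have := le_max_left A 0
    linarith
  set r : ℝ := L ^ β / (d:ℝ) with hrdef
  have hr0 : 0 < r := by
    apply div_pos _ hd0
    exact Real.rpow_pos_of_pos hL0 β
  have hr1 : r < 1 := by
    rw [hrdef, div_lt_one hd0]; exact hLβ
  set C : ℝ := A' ^ β * (2*K) ^ (1-β) * (1-r)⁻¹ with hCdef
  have hC0 : 0 < C := by
    apply mul_pos (mul_pos (Real.rpow_pos_of_pos hA'0 β)
      (Real.rpow_pos_of_pos (by linarith) (1-β)))
    rw [inv_pos]; linarith
  refine ⟨C, hC0, ?_⟩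
  intro x y
  rcases eq_or_lt_of_le (dist_nonneg (x := x) (y := y)) with hρ | hρ
  · have hxy : x = y := eq_of_dist_eq_zero hρ.symm
    subst hxy
    simp [Real.zero_rpow (ne_of_gt hβ)]
  -- main case : dist x y > 0
  set ρ : ℝ := dist x y with hρdef
  set M : ℝ := A' ^ β * (2*K) ^ (1-β) * ρ ^ β with hMdef
  have hM0 : 0 < M := by
    apply mul_pos (mul_pos (Real.rpow_pos_of_pos hA'0 β)
      (Real.rpow_pos_of_pos (by linarith) (1-β))) (Real.rpow_pos_of_pos hρ β)
  have key : ∀ n : ℕ, |((d : ℝ) ^ n)⁻¹ * v (n + 1) (seqComp T n x)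
      - ((d : ℝ) ^ n)⁻¹ * v (n + 1) (seqComp T n y)| ≤ M * r ^ n := by
    intro n
    set a : ℝ := A' * (L ^ n * ρ) with hadef
    have ha0 : 0 < a := by positivity
    have hb0 : (0:ℝ) < 2*K := by linarith
    have h1 : |v (n+1) (seqComp T n x) - v (n+1) (seqComp T n y)| ≤ min a (2*K) := by
      refine le_min ?_ ?_
      · refine (hlip' _ _ _).trans ?_
        exact mul_le_mul_of_nonneg_left (hseq n x y) hA'0.le
      · calc |v (n+1) (seqComp T n x) - v (n+1) (seqComp T n y)|
            ≤ |v (n+1) (seqComp T n x)| + |v (n+1) (seqComp T n y)| := abs_sub _ _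
          _ ≤ K + K := add_le_add (hb _ _) (hb _ _)
          _ = 2*K := by ring
    have hmin : min a (2*K) ≤ a ^ β * (2*K) ^ (1-β) := by
      have hm0 : 0 < min a (2*K) := lt_min ha0 hb0
      calc min a (2*K) = (min a (2*K)) ^ β * (min a (2*K)) ^ (1-β) := by
            rw [← Real.rpow_add hm0]; norm_num
        _ ≤ a ^ β * (2*K) ^ (1-β) := by
            apply mul_le_mul
            · exact Real.rpow_le_rpow hm0.le (min_le_left _ _) hβ.le
            · exact Real.rpow_le_rpow hm0.le (min_le_right _ _) (by linarith)
            · positivity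
            · positivity
    have hpow : ((L:ℝ) ^ n) ^ β = (L ^ β) ^ n := by
      rw [← Real.rpow_natCast L n, ← Real.rpow_natCast (L ^ β) n,
        ← Real.rpow_mul hL0.le, ← Real.rpow_mul hL0.le, mul_comm]
    have haβ : a ^ β = A' ^ β * (L ^ β) ^ n * ρ ^ β := by
      rw [hadef, Real.mul_rpow hA'0.le (by positivity), Real.mul_rpow (by positivity) hρ.le,
        hpow]
      ring
    rw [← mul_sub, abs_mul, abs_inv, abs_pow, abs_of_pos hd0]
    calc ((d:ℝ) ^ n)⁻¹ * |v (n+1) (seqComp T n x) - v (n+1) (seqComp T n y)|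
        ≤ ((d:ℝ) ^ n)⁻¹ * (a ^ β * (2*K) ^ (1-β)) := by
          exact mul_le_mul_of_nonneg_left (h1.trans hmin) (by positivity)
      _ = M * r ^ n := by
          rw [haβ, hMdef, hrdef, div_pow]
          field_simp
  have hsx := hsum x
  have hsy := hsum y
  have hsub : (fun n => ((d : ℝ) ^ n)⁻¹ * v (n + 1) (seqComp T n x)
      - ((d : ℝ) ^ n)⁻¹ * v (n + 1) (seqComp T n y)) =
      (fun n => ((d : ℝ) ^ n)⁻¹ * v (n + 1) (seqComp T n x)) -
      (fun n => ((d : ℝ) ^ n)⁻¹ * v (n + 1) (seqComp T n y)) := rfl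
  have hgeom : Summable (fun n : ℕ => M * r ^ n) :=
    (summable_geometric_of_lt_one hr0.le hr1).mul_left M
  have hdiff : Summable (fun n => ((d : ℝ) ^ n)⁻¹ * v (n + 1) (seqComp T n x)
      - ((d : ℝ) ^ n)⁻¹ * v (n + 1) (seqComp T n y)) := hsx.sub hsy
  have habs : Summable (fun n => |((d : ℝ) ^ n)⁻¹ * v (n + 1) (seqComp T n x)
      - ((d : ℝ) ^ n)⁻¹ * v (n + 1) (seqComp T n y)|) := by
    apply Summable.of_nonneg_of_le (fun n => abs_nonneg _) key hgeom
  calc |(∑' n, ((d : ℝ) ^ n)⁻¹ * v (n + 1) (seqComp T n x)) -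
          (∑' n, ((d : ℝ) ^ n)⁻¹ * v (n + 1) (seqComp T n y))|
      = |∑' n, (((d : ℝ) ^ n)⁻¹ * v (n + 1) (seqComp T n x)
          - ((d : ℝ) ^ n)⁻¹ * v (n + 1) (seqComp T n y))| := by
        rw [Summable.tsum_sub hsx hsy]
    _ ≤ ∑' n, |((d : ℝ) ^ n)⁻¹ * v (n + 1) (seqComp T n x)
          - ((d : ℝ) ^ n)⁻¹ * v (n + 1) (seqComp T n y)| := by
        have h := norm_tsum_le_tsum_norm (f := fun n => ((d : ℝ) ^ n)⁻¹ * v (n + 1) (seqComp T n x)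
          - ((d : ℝ) ^ n)⁻¹ * v (n + 1) (seqComp T n y)) (by simpa [Real.norm_eq_abs] using habs)
        simpa [Real.norm_eq_abs] using h
    _ ≤ ∑' n, M * r ^ n := Summable.tsum_le_tsum key habs hgeom
    _ = M * (1-r)⁻¹ := by rw [tsum_mul_left, tsum_geometric_of_lt_one hr0.le hr1]
    _ = C * ρ ^ β := by rw [hMdef, hCdef]; ring
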